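/- Assume F is l̲-strongly monotone with l̲ > 0, and both F and 𝐅 are l-Lipschitz with l > 0. Let z* ∈ ℝ^N, set Z* = 1 (z*)ᵀ ∈ ℝ^{N×N}, and for any Z ∈ ℝ^{N×N} write Z̃ = Z − Z*, C = (1/N) 1 1ᵀ Z̃ (the consensus component of Z̃, whose rows all equal the average of the rows of Z̃), and D = Z̃ − C. Then Σ_{i=1}^N Z̃_{ii} (𝐅(Z)_i − 𝐅(Z*)_i) ≥ (l̲/N) ‖C‖² − (2l/√N) ‖C‖ ‖D‖ − l ‖D‖², where ‖·‖ is the Frobenius norm. -/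

import Mathlib

open scoped BigOperators

/-- Euclidean norm of a vector in `ℝ^N`. -/
noncomputable def vnorm {N : ℕ} (x : Fin N → ℝ) : ℝ := Real.sqrt (∑ i, (x i) ^ 2)

/-- Frobenius norm of a matrix in `ℝ^{N×N}`. -/
noncomputable def mnorm {N : ℕ} (A : Matrix (Fin N) (Fin N) ℝ) : ℝ :=
  Real.sqrt (∑ i, ∑ j, (A i j) ^ 2)

/-!
Write `c` for the column mean of `Z̃`, so that `C = 1 cᵀ` and `‖C‖ = √N ‖c‖`, and compare `Z`
with the consensus point `Z̄ = 1 (z* + c)ᵀ`, which satisfies `Z − Z̄ = D`. Then `Z̃ᵢᵢ = cᵢ + Dᵢᵢ` and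
`𝐅(Z) − 𝐅(Z*) = (𝐅(Z) − 𝐅(Z̄)) + (F(z* + c) − F(z*))`. Of the four resulting products, `c` against
the second difference is at least `l̲‖c‖²` by strong monotonicity; the other three are bounded below
by Cauchy–Schwarz and the Lipschitz bounds `‖𝐅(Z) − 𝐅(Z̄)‖ ≤ l‖D‖`, `‖F(z* + c) − F(z*)‖ ≤ l‖c‖`,
together with `‖diag D‖ ≤ ‖D‖`.
-/

section Norms

variable {N : ℕ}

lemma vnorm_nonneg (x : Fin N → ℝ) : 0 ≤ vnorm x := Real.sqrt_nonneg _

lemma vnorm_neg (x : Fin N → ℝ) : vnorm (-x) = vnorm x := by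
  simp only [vnorm, Pi.neg_apply, neg_sq]

lemma vnorm_diag_le_mnorm (A : Matrix (Fin N) (Fin N) ℝ) : vnorm (fun i => A i i) ≤ mnorm A :=
  Real.sqrt_le_sqrt <| Finset.sum_le_sum fun i _ =>
    Finset.single_le_sum (f := fun j => A i j ^ 2) (fun _ _ => sq_nonneg _) (Finset.mem_univ i)

lemma mnorm_replicateRow (v : Fin N → ℝ) :
    mnorm (Matrix.replicateRow (Fin N) v) = Real.sqrt N * vnorm v := by
  rw [mnorm, vnorm, ← Real.sqrt_mul N.cast_nonneg]
  simp [Matrix.replicateRow_apply]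

lemma neg_mul_le_sum_mul_of_vnorm_le {a b : Fin N → ℝ} {α β : ℝ}
    (ha : vnorm a ≤ α) (hb : vnorm b ≤ β) : -(α * β) ≤ ∑ i, a i * b i := by
  have hcs : ∑ i, (-a) i * b i ≤ vnorm (-a) * vnorm b :=
    Real.sum_mul_le_sqrt_mul_sqrt _ _ _
  have hαβ : vnorm a * vnorm b ≤ α * β :=
    mul_le_mul ha hb (vnorm_nonneg b) ((vnorm_nonneg a).trans ha)
  simp only [Pi.neg_apply, neg_mul, Finset.sum_neg_distrib, vnorm_neg] at hcs
  linarith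

end Norms

lemma sum_mul_sub_le_sum_add_mul_add {N : ℕ} {l δ : ℝ} {c d a b : Fin N → ℝ}
    (hd : vnorm d ≤ δ) (ha : vnorm a ≤ l * δ) (hb : vnorm b ≤ l * vnorm c) :
    ∑ i, c i * b i - 2 * l * vnorm c * δ - l * δ ^ 2 ≤ ∑ i, (c i + d i) * (a i + b i) := by
  have hca := neg_mul_le_sum_mul_of_vnorm_le le_rfl ha (a := c)
  have hdb := neg_mul_le_sum_mul_of_vnorm_le hd hb
  have hda := neg_mul_le_sum_mul_of_vnorm_le hd ha
  have hsplit : ∑ i, (c i + d i) * (a i + b i)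
      = ∑ i, c i * b i + ∑ i, c i * a i + ∑ i, d i * b i + ∑ i, d i * a i := by
    simp only [← Finset.sum_add_distrib]
    exact Finset.sum_congr rfl fun i _ => by ring
  rw [hsplit]
  linarith

theorem cross_term_estimate_general
    (N : ℕ) (hN : 1 ≤ N)
    -- pseudogradient `F` and extended pseudogradient `𝐅` (row-wise evaluation)
    (F : (Fin N → ℝ) → (Fin N → ℝ)) (bF : Matrix (Fin N) (Fin N) ℝ → (Fin N → ℝ))
    (hbF : ∀ Z i, bF Z i = F (Z i) i)
    (lunder l : ℝ)
    -- F is l̲-strongly monotone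
    (hmono : ∀ x y : Fin N → ℝ,
      lunder * (vnorm (x - y)) ^ 2 ≤ ∑ i, (F x i - F y i) * (x i - y i))
    -- F and 𝐅 are both l-Lipschitz
    (hFlip : ∀ x y : Fin N → ℝ, vnorm (F x - F y) ≤ l * vnorm (x - y))
    (hbFlip : ∀ Z W : Matrix (Fin N) (Fin N) ℝ,
      vnorm (bF Z - bF W) ≤ l * mnorm (Z - W))
    -- the point z*, the matrix Z* = 1 (z*)ᵀ, and the decomposition Z̃ = C + D
    (zstar : Fin N → ℝ) (Z Zstar Zt C D : Matrix (Fin N) (Fin N) ℝ)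
    (hZstar : Zstar = Matrix.of (fun _ j => zstar j))
    (hZt : Zt = Z - Zstar)
    (hC : C = Matrix.of (fun _ j => (∑ k, Zt k j) / N))
    (hD : D = Zt - C) :
    (lunder / N) * (mnorm C) ^ 2 - (2 * l / Real.sqrt N) * mnorm C * mnorm D
        - l * (mnorm D) ^ 2
      ≤ ∑ i, Zt i i * (bF Z i - bF Zstar i) := by
  set c : Fin N → ℝ := fun j => (∑ k, Zt k j) / N
  replace hC : C = Matrix.replicateRow (Fin N) c := hC
  replace hZstar : Zstar = Matrix.replicateRow (Fin N) zstar := hZstar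
  set Zbar := Matrix.replicateRow (Fin N) (zstar + c) with hZbar_def
  have hZbar : Z - Zbar = D := by
    rw [hZbar_def, Matrix.replicateRow_add, ← hZstar, ← hC, hD, hZt]
    abel
  have hdiff : ∀ i, bF Z i - bF Zstar i = (bF Z i - bF Zbar i) + (F (zstar + c) i - F zstar i) :=
    fun i => by
      rw [hbF Zbar, hbF Zstar, hZstar]
      change _ - F zstar i = _ - F (zstar + c) i + _
      ring
  have hdiag : ∀ i, Zt i i = c i + D i i := fun i => by rw [hD, hC]; simp
  have hcb : lunder * vnorm c ^ 2 ≤ ∑ i, c i * (F (zstar + c) i - F zstar i) := by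
    simpa [mul_comm] using hmono (zstar + c) zstar
  have hb : vnorm (F (zstar + c) - F zstar) ≤ l * vnorm c := by
    simpa using hFlip (zstar + c) zstar
  have ha : vnorm (bF Z - bF Zbar) ≤ l * mnorm D := hZbar ▸ hbFlip Z Zbar
  have hcross := sum_mul_sub_le_sum_add_mul_add (vnorm_diag_le_mnorm D) ha hb
  simp only [Pi.sub_apply] at hcross
  have hN0 : (N : ℝ) ≠ 0 := Nat.cast_ne_zero.2 (by omega)
  have hscale : lunder / N * (Real.sqrt N * vnorm c) ^ 2
      - 2 * l / Real.sqrt N * (Real.sqrt N * vnorm c) * mnorm D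
      = lunder * vnorm c ^ 2 - 2 * l * vnorm c * mnorm D := by
    rw [mul_pow, Real.sq_sqrt N.cast_nonneg]
    field_simp
  simp only [hdiag, hdiff]
  rw [hC, mnorm_replicateRow]
  linarith

/-- The key cross-term estimate: with `Z̃ = Z − 1(z*)ᵀ`,
`C = (1/N)11ᵀZ̃` (consensus component) and `D = Z̃ − C`,
`Σ_i Z̃_{ii} (𝐅(Z)_i − 𝐅(Z*)_i) ≥ (l̲/N)‖C‖² − (2l/√N)‖C‖‖D‖ − l‖D‖²`. -/
theorem cross_term_estimate
    (N : ℕ) (hN : 1 ≤ N)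
    -- pseudogradient `F` and extended pseudogradient `𝐅` (row-wise evaluation)
    (F : (Fin N → ℝ) → (Fin N → ℝ)) (bF : Matrix (Fin N) (Fin N) ℝ → (Fin N → ℝ))
    (hbF : ∀ Z i, bF Z i = F (Z i) i)
    (lunder l : ℝ) (hlunder : 0 < lunder) (hl : 0 < l)
    -- F is l̲-strongly monotone
    (hmono : ∀ x y : Fin N → ℝ,
      lunder * (vnorm (x - y)) ^ 2 ≤ ∑ i, (F x i - F y i) * (x i - y i))
    -- F and 𝐅 are both l-Lipschitz
    (hFlip : ∀ x y : Fin N → ℝ, vnorm (F x - F y) ≤ l * vnorm (x - y))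
    (hbFlip : ∀ Z W : Matrix (Fin N) (Fin N) ℝ,
      vnorm (bF Z - bF W) ≤ l * mnorm (Z - W))
    -- the point z*, the matrix Z* = 1 (z*)ᵀ, and the decomposition Z̃ = C + D
    (zstar : Fin N → ℝ) (Z Zstar Zt C D : Matrix (Fin N) (Fin N) ℝ)
    (hZstar : Zstar = Matrix.of (fun _ j => zstar j))
    (hZt : Zt = Z - Zstar)
    (hC : C = Matrix.of (fun _ j => (∑ k, Zt k j) / N))
    (hD : D = Zt - C) :
    (lunder / N) * (mnorm C) ^ 2 - (2 * l / Real.sqrt N) * mnorm C * mnorm D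
        - l * (mnorm D) ^ 2
      ≤ ∑ i, Zt i i * (bF Z i - bF Zstar i) :=
  cross_term_estimate_general N hN F bF hbF lunder l hmono hFlip hbFlip zstar Z Zstar Zt C D hZstar
    hZt hC hD
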